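/- Let M be a loopless matroid of rank r > 0 on a finite ground set. Then Σ_{F ∈ L(M)} P_{M_F}(t) · (−1)^{r − rk F} · Q_{M^F}(t) = 0 and Σ_{F ∈ L(M)} P_{M^F}(t) · (−1)^{rk F} · Q_{M_F}(t) = 0. -/

import Mathlib

/-! Self-contained definitions: matroid minors, rank, flats, the Möbius function of the
lattice of flats, the characteristic polynomial, the defining axioms of the
(inverse) Kazhdan–Lusztig polynomials of a matroid, and basic structural notions
(circuits, connectivity, simplicity, representability, modularity). -/

open Polynomial Matroid

set_option linter.unusedSectionVars false
set_option linter.unusedVariables false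
set_option maxHeartbeats 1000000

namespace KL

variable {α : Type} [Fintype α]

/-- The deletion of a set `D` from the matroid `M`. -/
def del (M : Matroid α) (D : Set α) : Matroid α := M ↾ (M.E \ D)

/-- The contraction of the matroid `M` by the set `C`, defined by duality. -/
def con (M : Matroid α) (C : Set α) : Matroid α := (del M✶ C)✶

/-- The rank of a matroid on a finite ground set: the maximal size of an independent set. -/
noncomputable def rk (M : Matroid α) : ℕ := sSup {n | ∃ I, M.Indep I ∧ I.ncard = n}

/-- The rank of a set `X` in a matroid `M`. -/
noncomputable def rkSet (M : Matroid α) (X : Set α) : ℕ := rk (M ↾ X)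

/-- A matroid is loopless if every singleton of its ground set is independent. -/
def Loopless (M : Matroid α) : Prop := ∀ e ∈ M.E, M.Indep {e}

/-- A circuit of a matroid is a minimal dependent set. -/
def Circuit (M : Matroid α) (C : Set α) : Prop :=
  M.Dep C ∧ ∀ D, M.Dep D → D ⊆ C → D = C

/-- A matroid is connected if its ground set is nonempty and every two distinct
elements of the ground set lie in a common circuit. -/
def Connected (M : Matroid α) : Prop :=
  M.E.Nonempty ∧ ∀ e f, e ∈ M.E → f ∈ M.E → e ≠ f → ∃ C, Circuit M C ∧ e ∈ C ∧ f ∈ C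

/-- A matroid is simple if it has no loops and no pair of parallel elements; equivalently,
every subset of the ground set with at most two elements is independent. -/
def Simple (M : Matroid α) : Prop :=
  ∀ I : Set α, I ⊆ M.E → I.ncard ≤ 2 → M.Indep I

/-- A matroid is representable over a field `𝔽` if there is an assignment of vectors to the
elements of the ground set such that independence coincides with linear independence. -/
def Representable (M : Matroid α) (𝔽 : Type) [Field 𝔽] : Prop :=
  ∃ (n : ℕ) (φ : α → (Fin n → 𝔽)), ∀ I : Set α,
    M.Indep I ↔ (I ⊆ M.E ∧ LinearIndependent 𝔽 (fun x : I => φ x))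

/-- A matroid is regular if it is representable over every field. -/
def Regular (M : Matroid α) : Prop := ∀ (𝔽 : Type) (_ : Field 𝔽), Representable M 𝔽

/-- The lattice of flats of `M` is modular: `rk F + rk G = rk (F ∨ G) + rk (F ∧ G)` for all
flats `F, G`, where the join of two flats is the closure of their union and their meet is
their intersection. -/
def ModularFlats (M : Matroid α) : Prop :=
  ∀ F G : Set α, M.IsFlat F → M.IsFlat G →
    rkSet M F + rkSet M G = rkSet M (M.closure (F ∪ G)) + rkSet M (F ∩ G)

open Classical in
/-- The finset of flats of a matroid on a finite ground set. -/
noncomputable def flats (M : Matroid α) : Finset (Set α) :=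
  Finset.univ.filter fun F => M.IsFlat F

open Classical in
/-- The Möbius function of the lattice of flats of `M`, as a function on pairs of sets
(zero when either set is not a flat, and zero on non-ordered pairs of flats). -/
noncomputable def mob (M : Matroid α) (F G : Set α) : ℤ :=
  letI : LocallyFiniteOrder {X : Set α // M.IsFlat X} := Fintype.toLocallyFiniteOrder
  if hF : M.IsFlat F then
    if hG : M.IsFlat G then
      IncidenceAlgebra.mu ℤ (⟨F, hF⟩ : {X : Set α // M.IsFlat X}) ⟨G, hG⟩
    else 0
  else 0

open Classical in
/-- The doubly-indexed Whitney numbers of the first kind: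
`w_{i,j} = Σ μ(F,G)` over pairs of flats `F ⊆ G` with `rk F = i` and `rk G = j`. -/
noncomputable def whitney (M : Matroid α) (i j : ℕ) : ℤ :=
  ∑ F ∈ flats M, ∑ G ∈ flats M,
    if rkSet M F = i ∧ rkSet M G = j ∧ F ⊆ G then mob M F G else 0

/-- The characteristic polynomial `χ_M(t) = Σ_{F ∈ L(M)} μ(∅,F) t^(r - rk F)`
of a (loopless) matroid. -/
noncomputable def chi (M : Matroid α) : Polynomial ℤ :=
  ∑ F ∈ flats M, C (mob M ∅ F) * X ^ (rk M - rkSet M F)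

/-- The defining axioms of the Kazhdan–Lusztig polynomial assignment `M ↦ P_M(t)`:
`P_M = 1` in rank `0`; `deg P_M < r/2` for `r > 0`; and the defining recursion
`t^r P_M(t⁻¹) = Σ_{F ∈ L(M)} χ_{M_F}(t) P_{M^F}(t)`, where `t^r P_M(t⁻¹)` is
formalized as `reflect r P_M`. -/
def IsKLPolynomial (P : Matroid α → Polynomial ℤ) : Prop :=
  (∀ N : Matroid α, Loopless N → rk N = 0 → P N = 1) ∧
  (∀ N : Matroid α, Loopless N → 0 < rk N → 2 * (P N).natDegree < rk N) ∧
  (∀ N : Matroid α, Loopless N →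
    (P N).reflect (rk N) = ∑ F ∈ flats N, chi (N ↾ F) * P (con N F))

/-- The defining axioms of the inverse Kazhdan–Lusztig polynomial assignment `M ↦ Q_M(t)`:
`Q_M = 1` in rank `0`; `deg Q_M < r/2` for `r > 0`; and the defining recursion
`(-1)^r t^r Q_M(t⁻¹) = Σ_{F ∈ L(M)} (-1)^(rk F) Q_{M_F}(t) · t^(r - rk F) χ_{M^F}(t⁻¹)`,
where `t^k p(t⁻¹)` is formalized as `reflect k p`. -/
def IsInvKLPolynomial (Q : Matroid α → Polynomial ℤ) : Prop :=
  (∀ N : Matroid α, Loopless N → rk N = 0 → Q N = 1) ∧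
  (∀ N : Matroid α, Loopless N → 0 < rk N → 2 * (Q N).natDegree < rk N) ∧
  (∀ N : Matroid α, Loopless N →
    (-1 : Polynomial ℤ) ^ (rk N) * (Q N).reflect (rk N) =
      ∑ F ∈ flats N, (-1 : Polynomial ℤ) ^ (rkSet N F) * Q (N ↾ F) *
        (chi (con N F)).reflect (rk N - rkSet N F))

section Rank

open Set

variable {M : Matroid α} {X Y R I B F G : Set α} {e : α}

lemma mem_flats {F : Set α} : F ∈ flats M ↔ M.IsFlat F := by
  simp [flats]

lemma indep_ncard_le_rk (hI : M.Indep I) : I.ncard ≤ rk M := by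
  refine le_csSup ⟨Fintype.card α, ?_⟩ ⟨I, hI, rfl⟩
  rintro n ⟨J, hJ, rfl⟩
  simpa [Set.ncard_univ] using Set.ncard_le_ncard (Set.subset_univ J) Set.finite_univ

lemma rk_le {n : ℕ} (h : ∀ I, M.Indep I → I.ncard ≤ n) : rk M ≤ n :=
  csSup_le ⟨0, ∅, M.empty_indep, by simp⟩ (by rintro m ⟨J, hJ, rfl⟩; exact h J hJ)

lemma Base.rk_eq (hB : M.IsBase B) : rk M = B.ncard := by
  refine le_antisymm (rk_le fun I hI => ?_) (indep_ncard_le_rk hB.indep)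
  obtain ⟨B', hB', hIB'⟩ := hI.exists_isBase_superset
  exact (Set.ncard_le_ncard hIB' B'.toFinite).trans_eq (hB'.ncard_eq_ncard_of_isBase hB)

lemma Basis.rkSet_eq (h : M.IsBasis I X) : rkSet M X = I.ncard :=
  Base.rk_eq h.restrict_isBase

lemma rk_eq_rkSet_ground (M : Matroid α) : rk M = rkSet M M.E := by
  rw [rkSet, restrict_ground_eq_self]

lemma rkSet_mono (M : Matroid α) (h : X ⊆ Y) : rkSet M X ≤ rkSet M Y :=
  rk_le fun I hI => indep_ncard_le_rk
    (restrict_indep_iff.2 ⟨(restrict_indep_iff.1 hI).1, (restrict_indep_iff.1 hI).2.trans h⟩)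

lemma rkSet_le_rk (M : Matroid α) (X : Set α) : rkSet M X ≤ rk M :=
  rk_le fun I hI => indep_ncard_le_rk (restrict_indep_iff.1 hI).1

lemma rkSet_empty (M : Matroid α) : rkSet M ∅ = 0 :=
  Nat.le_zero.1 <| rk_le fun I hI => by
    have : I ⊆ ∅ := (restrict_indep_iff.1 hI).2
    simp [subset_empty_iff.1 this]

lemma rkSet_pos (h : Loopless M) (hX : X ⊆ M.E) (hne : X.Nonempty) : 0 < rkSet M X := by
  obtain ⟨e, he⟩ := hne
  have : ({e} : Set α).ncard ≤ rkSet M X :=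
    indep_ncard_le_rk (restrict_indep_iff.2 ⟨h e (hX he), singleton_subset_iff.2 he⟩)
  simpa [Nat.one_le_iff_ne_zero, Nat.pos_iff_ne_zero] using this

lemma flat_iff_closure_eq : M.IsFlat F ↔ M.closure F = F ∧ F ⊆ M.E := by
  refine ⟨fun h => ⟨h.closure, h.subset_ground⟩, fun ⟨h1, h2⟩ => ⟨fun I X hIF hIX => ?_, h2⟩⟩
  calc X ⊆ M.closure I := hIX.subset_closure
    _ = M.closure F := hIF.closure_eq_closure
    _ = F := h1

lemma closure_flat' (M : Matroid α) (X : Set α) : M.IsFlat (M.closure X) :=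
  flat_iff_closure_eq.2 ⟨M.closure_closure X, M.closure_subset_ground X⟩

lemma restrict_closure (hR : R ⊆ M.E) (hX : X ⊆ R) :
    (M ↾ R).closure X = M.closure X ∩ R := by
  obtain ⟨I, hI⟩ := (M ↾ R).exists_isBasis X (by simpa)
  have hIM : M.IsBasis I X := ((isBasis_restrict_iff hR).1 hI).1
  rw [← hI.closure_eq_closure, ← hIM.closure_eq_closure]
  ext e
  have hIc : M.Indep I := hIM.indep
  have hIr : (M ↾ R).Indep I := hI.indep
  simp only [hIr.mem_closure_iff', hIc.mem_closure_iff', restrict_ground_eq,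
    restrict_indep_iff, mem_inter_iff]
  constructor
  · rintro ⟨heR, h⟩
    exact ⟨⟨hR heR, fun hind => h ⟨hind, insert_subset heR (hIM.subset.trans hX)⟩⟩, heR⟩
  · rintro ⟨⟨heE, h⟩, heR⟩
    exact ⟨heR, fun hind => h hind.1⟩

lemma flat_restrict_iff (hG : M.IsFlat G) : (M ↾ G).IsFlat F ↔ M.IsFlat F ∧ F ⊆ G := by
  rw [flat_iff_closure_eq, flat_iff_closure_eq, restrict_ground_eq]
  constructor
  · rintro ⟨h1, h2⟩
    rw [restrict_closure hG.subset_ground h2] at h1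
    have hsub : M.closure F ⊆ G := by
      rw [← hG.closure]; exact M.closure_subset_closure h2
    rw [inter_eq_self_of_subset_left hsub] at h1
    exact ⟨⟨h1, h2.trans hG.subset_ground⟩, h2⟩
  · rintro ⟨⟨h1, _⟩, h2⟩
    rw [restrict_closure hG.subset_ground h2, h1]
    exact ⟨inter_eq_self_of_subset_left h2, h2⟩

lemma mem_flats_restrict (hG : M.IsFlat G) : F ∈ flats (M ↾ G) ↔ M.IsFlat F ∧ F ⊆ G := by
  rw [mem_flats, flat_restrict_iff hG]

lemma restrict_loopless (h : Loopless M) (hR : R ⊆ M.E) : Loopless (M ↾ R) := by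
  intro e he
  rw [restrict_ground_eq] at he
  exact restrict_indep_iff.2 ⟨h e (hR he), singleton_subset_iff.2 he⟩

lemma rkSet_restrict (M : Matroid α) (hX : X ⊆ R) : rkSet (M ↾ R) X = rkSet M X := by
  rw [rkSet, rkSet, restrict_restrict_eq _ hX]

lemma rk_restrict (M : Matroid α) (R : Set α) : rk (M ↾ R) = rkSet M R := rfl

end Rank

section Contract

open Set

variable {M : Matroid α} {C D X Y R I I' J B F G : Set α} {e : α}

lemma del_eq (M : Matroid α) (D : Set α) : del M D = M ↾ (M.E \ D) := rfl

lemma con_ground (M : Matroid α) (C : Set α) : (con M C).E = M.E \ C := rfl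

lemma indep_union_of_basis_basis (hI : M.IsBasis I C) (hI' : M.IsBasis I' C)
    (hJC : Disjoint J C) (h : M.Indep (I ∪ J)) : M.Indep (I' ∪ J) := by
  have hJE : J ⊆ M.E := subset_union_right.trans h.subset_ground
  obtain ⟨K, hK, hI'K⟩ := hI'.indep.subset_isBasis_of_subset
    (subset_union_left : I' ⊆ I' ∪ J) (union_subset hI'.indep.subset_ground hJE)
  have hJK : J ⊆ K := by
    by_contra hJK
    obtain ⟨x, hxJ, hxK⟩ := not_subset.1 hJK
    have hxI' : x ∉ I' := fun hx => hJC.ne_of_mem hxJ (hI'.subset hx) rfl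
    have hxI : x ∉ I := fun hx => hJC.ne_of_mem hxJ (hI.subset hx) rfl
    have h1 : x ∈ M.closure K := hK.subset_closure (mem_union_right _ hxJ)
    have h2 : K ⊆ I' ∪ (J \ {x}) := by
      intro y hy
      rcases hK.subset hy with hy' | hy'
      · exact mem_union_left _ hy'
      · exact mem_union_right _ ⟨hy', fun hxy => hxK (mem_singleton_iff.1 hxy ▸ hy)⟩
    have h3 : x ∈ M.closure (C ∪ (J \ {x})) :=
      M.closure_subset_closure (h2.trans (union_subset_union_left _ hI'.subset)) h1
    have h4 : M.closure (C ∪ (J \ {x})) ⊆ M.closure (I ∪ (J \ {x})) :=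
      calc M.closure (C ∪ (J \ {x})) ⊆ M.closure (M.closure I ∪ (J \ {x})) :=
            M.closure_subset_closure (union_subset_union_left _ hI.subset_closure)
        _ = M.closure (I ∪ (J \ {x})) := by simp
    have h5 : I ∪ (J \ {x}) = (I ∪ J) \ {x} := by
      rw [union_diff_distrib, diff_singleton_eq_self hxI]
    refine h.notMem_closure_sdiff_of_mem (mem_union_right _ hxJ) ?_
    rw [← h5]
    exact h4 h3
  have : I' ∪ J ⊆ K := union_subset hI'K hJK
  exact hK.indep.subset this

lemma con_indep_iff (hC : C ⊆ M.E) :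
    (con M C).Indep J ↔ J ⊆ M.E \ C ∧ ∃ I, M.IsBasis I C ∧ M.Indep (I ∪ J) := by
  have hE' : M.E \ C ⊆ M✶.E := by rw [dual_ground]; exact diff_subset
  constructor
  · intro h
    have h' : ((del M✶ C)✶).Indep J := h
    obtain ⟨hJE, B', hB', hJB'⟩ := dual_indep_iff_exists'.1 h'
    rw [del_eq, dual_ground] at hB' hJE
    rw [restrict_ground_eq] at hJE
    have hBB' : M✶.IsBasis B' (M.E \ C) := (isBase_restrict_iff hE').1 hB'
    obtain ⟨D, hD, rfl⟩ := hBB'.exists_isBase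
    have hDE : D ⊆ M.E := hD.subset_ground
    have hBc : M.IsBase (M.E \ D) := hD.compl_isBase_of_dual
    have hkey := (hBc.inter_isBasis_iff_compl_inter_isBasis_dual hC).2 ?_
    · refine ⟨hJE, (M.E \ D) ∩ C, hkey, ?_⟩
      have hJB : J ⊆ M.E \ D := by
        intro x hx
        refine ⟨(hJE hx).1, fun hxD => ?_⟩
        exact (disjoint_left.1 hJB') hx ⟨hxD, hJE hx⟩
      exact hBc.indep.subset (union_subset inter_subset_left hJB)
    · rwa [diff_diff_cancel_left hDE]
  · rintro ⟨hJE, I, hI, hIJ⟩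
    obtain ⟨B, hB, hIJB⟩ := hIJ.exists_isBase_superset
    have hBC : M.IsBasis (B ∩ C) C := by
      refine (hB.indep.inter_right C).isBasis_of_subset_of_subset_closure inter_subset_right ?_
      exact hI.subset_closure.trans (M.closure_subset_closure
        (subset_inter (subset_union_left.trans hIJB) hI.subset))
    have hdual := (hB.inter_isBasis_iff_compl_inter_isBasis_dual hC).1 hBC
    show ((del M✶ C)✶).Indep J
    refine dual_indep_iff_exists'.2 ⟨?_, (M.E \ B) ∩ (M.E \ C), ?_, ?_⟩
    · rwa [del_eq, dual_ground, restrict_ground_eq]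
    · rw [del_eq, dual_ground]
      exact (isBase_restrict_iff hE').2 hdual
    · exact disjoint_left.2 fun x hxJ ⟨⟨_, hxB⟩, _⟩ => hxB (hIJB (mem_union_right _ hxJ))

lemma con_indep_iff' (hC : C ⊆ M.E) (hI : M.IsBasis I C) :
    (con M C).Indep J ↔ J ⊆ M.E \ C ∧ M.Indep (I ∪ J) := by
  rw [con_indep_iff hC]
  refine ⟨fun ⟨h1, I', hI', h2⟩ => ⟨h1, ?_⟩, fun ⟨h1, h2⟩ => ⟨h1, I, hI, h2⟩⟩
  exact indep_union_of_basis_basis hI' hI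
    (disjoint_left.2 fun x hx => (h1 hx).2) h2

lemma con_loopless (h : Loopless M) (hF : M.IsFlat F) : Loopless (con M F) := by
  intro e he
  rw [con_ground] at he
  obtain ⟨I, hI⟩ := M.exists_isBasis F hF.subset_ground
  rw [con_indep_iff' hF.subset_ground hI]
  refine ⟨singleton_subset_iff.2 he, ?_⟩
  have heI : e ∉ I := fun h' => he.2 (hI.subset h')
  rw [union_singleton, hI.indep.insert_indep_iff_of_notMem heI,
    hI.closure_eq_closure, hF.closure]
  exact he

lemma con_closure (hC : C ⊆ M.E) (hX : X ⊆ M.E \ C) :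
    (con M C).closure X = M.closure (X ∪ C) \ C := by
  obtain ⟨I, hI⟩ := M.exists_isBasis C hC
  obtain ⟨J, hJ⟩ := (con M C).exists_isBasis X (by rwa [con_ground])
  obtain ⟨hJE, hIJ⟩ := (con_indep_iff' hC hI).1 hJ.indep
  have hJX : J ⊆ X := hJ.subset
  have hUb : M.IsBasis (I ∪ J) (X ∪ C) := by
    refine hIJ.isBasis_of_subset_of_subset_closure
      (union_subset (hI.subset.trans subset_union_right) (hJX.trans subset_union_left)) ?_
    refine union_subset ?_ (hI.subset_closure.trans
      (M.closure_subset_closure subset_union_left))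
    intro x hxX
    by_cases hxJ : x ∈ J
    · exact M.subset_closure _ hIJ.subset_ground (mem_union_right _ hxJ)
    have hx1 : x ∈ (con M C).closure J := hJ.subset_closure hxX
    have hx2 := (hJ.indep.mem_closure_iff' (x := x)).1 hx1
    rw [con_ground] at hx2
    have hxE : x ∈ M.E \ C := hX hxX
    have hnind : ¬ (con M C).Indep (insert x J) := fun hind => hxJ (hx2.2 hind)
    rw [con_indep_iff' hC hI, union_insert] at hnind
    push_neg at hnind
    have := hnind (insert_subset hxE hJE)
    have hxIJ : x ∉ I ∪ J := by
      rintro (hx | hx)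
      · exact hxE.2 (hI.subset hx)
      · exact hxJ hx
    by_contra hxcl
    exact this ((hIJ.insert_indep_iff_of_notMem hxIJ).2 ⟨hxE.1, hxcl⟩)
  ext e
  rw [← hJ.closure_eq_closure, ← hUb.closure_eq_closure]
  simp only [hJ.indep.mem_closure_iff', hIJ.mem_closure_iff', con_ground, mem_diff]
  constructor
  · rintro ⟨⟨heE, heC⟩, h⟩
    refine ⟨⟨heE, fun hind => ?_⟩, heC⟩
    have : (con M C).Indep (insert e J) := by
      rw [con_indep_iff' hC hI, union_insert]
      exact ⟨insert_subset ⟨heE, heC⟩ hJE, hind⟩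
    exact mem_union_right _ (h this)
  · rintro ⟨⟨heE, h⟩, heC⟩
    refine ⟨⟨heE, heC⟩, fun hind => ?_⟩
    rw [con_indep_iff' hC hI, union_insert] at hind
    rcases h hind.2 with hx | hx
    · exact absurd (hI.subset hx) heC
    · exact hx

lemma flat_con_iff (hF : M.IsFlat F) :
    (con M F).IsFlat X ↔ ∃ G, M.IsFlat G ∧ F ⊆ G ∧ X = G \ F := by
  rw [flat_iff_closure_eq, con_ground]
  constructor
  · rintro ⟨h1, h2⟩
    rw [con_closure hF.subset_ground h2] at h1
    refine ⟨M.closure (X ∪ F), closure_flat' _ _, ?_, h1.symm⟩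
    exact subset_union_right.trans (M.subset_closure _
      (union_subset (h2.trans diff_subset) hF.subset_ground))
  · rintro ⟨G, hG, hFG, rfl⟩
    have h2 : G \ F ⊆ M.E \ F := diff_subset_diff_left hG.subset_ground
    rw [con_closure hF.subset_ground h2, diff_union_of_subset hFG, hG.closure]
    exact ⟨rfl, h2⟩

lemma mem_flats_con (hF : M.IsFlat F) :
    X ∈ flats (con M F) ↔ ∃ G, M.IsFlat G ∧ F ⊆ G ∧ X = G \ F := by
  rw [mem_flats, flat_con_iff hF]

lemma con_con (M : Matroid α) (C D : Set α) : con (con M C) D = con M (C ∪ D) := by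
  unfold con
  rw [dual_dual]
  unfold del
  rw [restrict_ground_eq, restrict_restrict_eq _ diff_subset, diff_diff]

lemma con_restrict (hFG : F ⊆ G) (hG : G ⊆ M.E) :
    (con M F) ↾ (G \ F) = con (M ↾ G) F := by
  have hF : F ⊆ M.E := hFG.trans hG
  obtain ⟨I, hI⟩ := M.exists_isBasis F hF
  have hIG : (M ↾ G).IsBasis I F := (isBasis_restrict_iff hG).2 ⟨hI, hFG⟩
  refine ext_indep ?_ fun J hJ => ?_
  · rw [restrict_ground_eq, con_ground, restrict_ground_eq]
  · rw [restrict_ground_eq] at hJ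
    rw [restrict_indep_iff, con_indep_iff' hF hI,
      con_indep_iff' (show F ⊆ (M ↾ G).E from hFG) hIG, restrict_indep_iff,
      restrict_ground_eq]
    have hJG : J ⊆ M.E \ F := hJ.trans (diff_subset_diff_left hG)
    have hIJG : I ∪ J ⊆ G := union_subset (hI.subset.trans hFG) (hJ.trans diff_subset)
    constructor
    · rintro ⟨⟨_, h2⟩, _⟩
      exact ⟨hJ, h2, hIJG⟩
    · rintro ⟨_, h2, _⟩
      exact ⟨⟨hJG, h2⟩, hJ⟩

lemma rkSet_add_rk_con (hC : C ⊆ M.E) : rkSet M C + rk (con M C) = rk M := by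
  obtain ⟨I, hI⟩ := M.exists_isBasis C hC
  obtain ⟨B, hB, hIB⟩ := hI.indep.exists_isBase_superset
  have hBC : I = B ∩ C := hI.eq_of_subset_indep (hB.indep.inter_right C)
    (subset_inter hIB hI.subset) inter_subset_right
  have hBCb : (con M C).IsBase (B \ C) := by
    have hind : (con M C).Indep (B \ C) := by
      rw [con_indep_iff' hC hI]
      refine ⟨diff_subset_diff_left hB.subset_ground, ?_⟩
      have : I ∪ (B \ C) = B := by
        rw [hBC, inter_union_diff]
      rw [this]; exact hB.indep
    refine hind.isBase_of_ground_subset_closure ?_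
    rw [con_ground, con_closure hC (diff_subset_diff_left hB.subset_ground),
      diff_union_self]
    refine diff_subset_diff_left ?_
    rw [← hB.closure_eq]
    exact M.closure_subset_closure subset_union_left
  rw [Basis.rkSet_eq hI, Base.rk_eq hBCb, Base.rk_eq hB, hBC]
  exact Set.ncard_inter_add_ncard_diff_eq_ncard B C B.toFinite

lemma rk_con (hC : C ⊆ M.E) : rk (con M C) = rk M - rkSet M C := by
  have := rkSet_add_rk_con (M := M) hC; omega

lemma rkSet_con (hFG : F ⊆ G) (hG : G ⊆ M.E) :
    rkSet M F + rkSet (con M F) (G \ F) = rkSet M G := by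
  have h1 : rkSet (con M F) (G \ F) = rk (con (M ↾ G) F) := by
    rw [rkSet, con_restrict hFG hG]
  rw [h1, ← rkSet_restrict M hFG, ← rk_restrict M G]
  exact rkSet_add_rk_con (M := M ↾ G) (by rwa [restrict_ground_eq])

end Contract

open scoped Classical

section Mob

open Set Finset

variable {M : Matroid α} {F G H R A : Set α}

lemma mob_eq_mu [inst : LocallyFiniteOrder {X : Set α // M.IsFlat X}]
    (hF : M.IsFlat F) (hG : M.IsFlat G) :
    mob M F G = IncidenceAlgebra.mu ℤ (⟨F, hF⟩ : {X : Set α // M.IsFlat X}) ⟨G, hG⟩ := by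
  unfold mob
  rw [dif_pos hF, dif_pos hG]
  congr!
  exact Subsingleton.elim _ _

lemma mob_self (hF : M.IsFlat F) : mob M F F = 1 := by
  letI : LocallyFiniteOrder {X : Set α // M.IsFlat X} := Fintype.toLocallyFiniteOrder
  rw [mob_eq_mu hF hF]
  simp

lemma mob_not_subset (h : ¬ F ⊆ G) : mob M F G = 0 := by
  letI : LocallyFiniteOrder {X : Set α // M.IsFlat X} := Fintype.toLocallyFiniteOrder
  unfold mob
  split_ifs with hF hG
  · exact IncidenceAlgebra.apply_eq_zero_of_not_le
      (a := (⟨F, hF⟩ : {X : Set α // M.IsFlat X})) (b := ⟨G, hG⟩)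
      (fun hle => h hle) (IncidenceAlgebra.mu ℤ)
  · rfl
  · rfl

lemma sum_flats_eq_univ {β : Type} [AddCommMonoid β] (M : Matroid α) (g : Set α → β) :
    ∑ H ∈ flats M, g H = ∑ H ∈ Finset.univ, if M.IsFlat H then g H else 0 := by
  unfold flats
  rw [Finset.sum_filter]

lemma sum_mob_right (hF : M.IsFlat F) (hG : M.IsFlat G) :
    ∑ H ∈ flats M, (if F ⊆ H ∧ H ⊆ G then mob M F H else 0)
      = if F = G then 1 else 0 := by
  letI : LocallyFiniteOrder {X : Set α // M.IsFlat X} := Fintype.toLocallyFiniteOrder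
  have key := IncidenceAlgebra.sum_Icc_mu_right (𝕜 := ℤ)
    (⟨F, hF⟩ : {X : Set α // M.IsFlat X}) ⟨G, hG⟩
  have key2 : ∑ x ∈ Finset.univ,
      (if x ∈ Finset.Icc (⟨F, hF⟩ : {X : Set α // M.IsFlat X}) ⟨G, hG⟩
        then IncidenceAlgebra.mu ℤ (⟨F, hF⟩ : {X : Set α // M.IsFlat X}) x else 0)
      = if (⟨F, hF⟩ : {X : Set α // M.IsFlat X}) = ⟨G, hG⟩ then 1 else 0 := by
    rw [Finset.sum_ite_mem, Finset.univ_inter, key]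
  rw [Finset.sum_subtype (p := fun X => M.IsFlat X) _ (fun x => mem_flats)
    (fun H => if F ⊆ H ∧ H ⊆ G then mob M F H else 0)]
  have h1 : ∀ x : {X : Set α // M.IsFlat X},
      (if F ⊆ x.1 ∧ x.1 ⊆ G then mob M F x.1 else 0)
      = if x ∈ Finset.Icc (⟨F, hF⟩ : {X : Set α // M.IsFlat X}) ⟨G, hG⟩
        then IncidenceAlgebra.mu ℤ (⟨F, hF⟩ : {X : Set α // M.IsFlat X}) x else 0 := by
    intro x
    by_cases hx : F ⊆ x.1 ∧ x.1 ⊆ G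
    · have hmem : x ∈ Finset.Icc (⟨F, hF⟩ : {X : Set α // M.IsFlat X}) ⟨G, hG⟩ :=
        Finset.mem_Icc.2 ⟨hx.1, hx.2⟩
      rw [if_pos hx, if_pos hmem, mob_eq_mu hF x.2]
    · have hmem : x ∉ Finset.Icc (⟨F, hF⟩ : {X : Set α // M.IsFlat X}) ⟨G, hG⟩ := by
        intro h
        exact hx ⟨(Finset.mem_Icc.1 h).1, (Finset.mem_Icc.1 h).2⟩
      rw [if_neg hx, if_neg hmem]
  rw [Finset.sum_congr rfl (fun x _ => h1 x), key2]
  by_cases hFG : F = G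
  · subst hFG; simp
  · rw [if_neg (by simpa [Subtype.mk_eq_mk] using hFG), if_neg hFG]

lemma sum_mob_left (hF : M.IsFlat F) (hG : M.IsFlat G) :
    ∑ H ∈ flats M, (if F ⊆ H ∧ H ⊆ G then mob M H G else 0)
      = if F = G then 1 else 0 := by
  letI : LocallyFiniteOrder {X : Set α // M.IsFlat X} := Fintype.toLocallyFiniteOrder
  have key := IncidenceAlgebra.sum_Icc_mu_left (𝕜 := ℤ)
    (⟨F, hF⟩ : {X : Set α // M.IsFlat X}) ⟨G, hG⟩
  have key2 : ∑ x ∈ Finset.univ,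
      (if x ∈ Finset.Icc (⟨F, hF⟩ : {X : Set α // M.IsFlat X}) ⟨G, hG⟩
        then IncidenceAlgebra.mu ℤ x (⟨G, hG⟩ : {X : Set α // M.IsFlat X}) else 0)
      = if (⟨F, hF⟩ : {X : Set α // M.IsFlat X}) = ⟨G, hG⟩ then 1 else 0 := by
    rw [Finset.sum_ite_mem, Finset.univ_inter, key]
  rw [Finset.sum_subtype (p := fun X => M.IsFlat X) _ (fun x => mem_flats)
    (fun H => if F ⊆ H ∧ H ⊆ G then mob M H G else 0)]
  have h1 : ∀ x : {X : Set α // M.IsFlat X},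
      (if F ⊆ x.1 ∧ x.1 ⊆ G then mob M x.1 G else 0)
      = if x ∈ Finset.Icc (⟨F, hF⟩ : {X : Set α // M.IsFlat X}) ⟨G, hG⟩
        then IncidenceAlgebra.mu ℤ x (⟨G, hG⟩ : {X : Set α // M.IsFlat X}) else 0 := by
    intro x
    by_cases hx : F ⊆ x.1 ∧ x.1 ⊆ G
    · have hmem : x ∈ Finset.Icc (⟨F, hF⟩ : {X : Set α // M.IsFlat X}) ⟨G, hG⟩ :=
        Finset.mem_Icc.2 ⟨hx.1, hx.2⟩
      rw [if_pos hx, if_pos hmem, mob_eq_mu x.2 hG]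
    · have hmem : x ∉ Finset.Icc (⟨F, hF⟩ : {X : Set α // M.IsFlat X}) ⟨G, hG⟩ := by
        intro h
        exact hx ⟨(Finset.mem_Icc.1 h).1, (Finset.mem_Icc.1 h).2⟩
      rw [if_neg hx, if_neg hmem]
  rw [Finset.sum_congr rfl (fun x _ => h1 x), key2]
  by_cases hFG : F = G
  · subst hFG; simp
  · rw [if_neg (by simpa [Subtype.mk_eq_mk] using hFG), if_neg hFG]

lemma mob_map (M₁ M₂ : Matroid α) (φ : Set α → Set α) (F G : Set α)
    (hF : M₁.IsFlat F) (hG : M₁.IsFlat G) (hFG : F ⊆ G)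
    (himg : ∀ H, M₁.IsFlat H → F ⊆ H → H ⊆ G → M₂.IsFlat (φ H))
    (hsurj : ∀ K, M₂.IsFlat K → φ F ⊆ K → K ⊆ φ G →
        ∃ H, M₁.IsFlat H ∧ F ⊆ H ∧ H ⊆ G ∧ φ H = K)
    (hmono : ∀ H H', M₁.IsFlat H → F ⊆ H → H ⊆ G → M₁.IsFlat H' → F ⊆ H' → H' ⊆ G →
        (H ⊆ H' ↔ φ H ⊆ φ H')) :
    mob M₂ (φ F) (φ G) = mob M₁ F G := by
  have hφF : M₂.IsFlat (φ F) := himg F hF Subset.rfl hFG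
  have hφG : M₂.IsFlat (φ G) := himg G hG hFG Subset.rfl
  by_cases hFGeq : F = G
  · subst hFGeq; rw [mob_self hφF, mob_self hF]
  · have hφFG : φ F ⊆ φ G := (hmono F G hF Subset.rfl hFG hG hFG Subset.rfl).1 hFG
    have hφne : φ F ≠ φ G := by
      intro h
      apply hFGeq
      apply subset_antisymm hFG
      exact (hmono G F hG hFG Subset.rfl hF Subset.rfl hFG).2 (h ▸ Subset.rfl)
    have hS1 := sum_mob_right hF hG
    have hS2 := sum_mob_right hφF hφG
    rw [if_neg hFGeq] at hS1
    rw [if_neg hφne] at hS2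
    have hre : (∑ K ∈ flats M₂, if φ F ⊆ K ∧ K ⊆ φ G then mob M₂ (φ F) K else 0)
        = ∑ H ∈ flats M₁, (if F ⊆ H ∧ H ⊆ G then mob M₂ (φ F) (φ H) else 0) := by
      rw [← Finset.sum_filter, ← Finset.sum_filter]
      refine (Finset.sum_bij (fun H _ => φ H) ?_ ?_ ?_ ?_).symm
      · intro H hH
        rw [Finset.mem_filter, mem_flats] at hH ⊢
        obtain ⟨h1, h2, h3⟩ := hH
        exact ⟨himg H h1 h2 h3, (hmono F H hF Subset.rfl hFG h1 h2 h3).1 h2,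
          (hmono H G h1 h2 h3 hG hFG Subset.rfl).1 h3⟩
      · intro H₁ hH₁ H₂ hH₂ heq
        rw [Finset.mem_filter, mem_flats] at hH₁ hH₂
        obtain ⟨a1, a2, a3⟩ := hH₁
        obtain ⟨b1, b2, b3⟩ := hH₂
        have heq' : φ H₁ = φ H₂ := heq
        exact subset_antisymm
          ((hmono H₁ H₂ a1 a2 a3 b1 b2 b3).2 (heq' ▸ Subset.rfl))
          ((hmono H₂ H₁ b1 b2 b3 a1 a2 a3).2 (heq' ▸ Subset.rfl))
      · intro K hK
        rw [Finset.mem_filter, mem_flats] at hK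
        obtain ⟨H, h1, h2, h3, h4⟩ := hsurj K hK.1 hK.2.1 hK.2.2
        exact ⟨H, Finset.mem_filter.2 ⟨mem_flats.2 h1, h2, h3⟩, h4⟩
      · exact fun H hH => rfl
    rw [hre] at hS2
    have hGmem : G ∈ flats M₁ := mem_flats.2 hG
    rw [← Finset.add_sum_erase _ _ hGmem] at hS1 hS2
    rw [if_pos ⟨hFG, Subset.rfl⟩] at hS1 hS2
    have herased : ∑ H ∈ (flats M₁).erase G, (if F ⊆ H ∧ H ⊆ G then mob M₂ (φ F) (φ H) else 0)
        = ∑ H ∈ (flats M₁).erase G, (if F ⊆ H ∧ H ⊆ G then mob M₁ F H else 0) := by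
      refine Finset.sum_congr rfl fun H hH => ?_
      by_cases hcond : F ⊆ H ∧ H ⊆ G
      · rw [if_pos hcond, if_pos hcond]
        have hHflat : M₁.IsFlat H := mem_flats.1 (Finset.mem_of_mem_erase hH)
        have hHG : H ⊆ G := hcond.2
        have hne : H ≠ G := Finset.ne_of_mem_erase hH
        have hlt : H.ncard < G.ncard :=
          Set.ncard_lt_ncard (Set.ssubset_iff_subset_ne.2 ⟨hHG, hne⟩) G.toFinite
        exact mob_map M₁ M₂ φ F H hF hHflat hcond.1
          (fun H' h1 h2 h3 => himg H' h1 h2 (h3.trans hHG))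
          (fun K k1 k2 k3 => by
            obtain ⟨H', a1, a2, a3, a4⟩ := hsurj K k1 k2
              (k3.trans ((hmono H G hHflat hcond.1 hHG hG hFG Subset.rfl).1 hHG))
            exact ⟨H', a1, a2, (hmono H' H a1 a2 a3 hHflat hcond.1 hHG).2 (a4 ▸ k3), a4⟩)
          (fun H' H'' b1 b2 b3 b4 b5 b6 =>
            hmono H' H'' b1 b2 (b3.trans hHG) b4 b5 (b6.trans hHG))
      · rw [if_neg hcond, if_neg hcond]
    rw [herased] at hS2
    omega
termination_by G.ncard
decreasing_by exact hlt

lemma mob_restrict (hR : M.IsFlat R) (hF : M.IsFlat F) (hG : M.IsFlat G) (hGR : G ⊆ R) :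
    mob (M ↾ R) F G = mob M F G := by
  by_cases hFG : F ⊆ G
  · exact mob_map M (M ↾ R) id F G hF hG hFG
      (fun H h1 _ h3 => (flat_restrict_iff hR).2 ⟨h1, h3.trans hGR⟩)
      (fun K k1 k2 k3 => ⟨K, ((flat_restrict_iff hR).1 k1).1, k2, k3, rfl⟩)
      (fun _ _ _ _ _ _ _ _ => Iff.rfl)
  · rw [mob_not_subset hFG, mob_not_subset hFG]

lemma mob_con {B : Set α} (hF : M.IsFlat F) (hA : M.IsFlat A) (hB : M.IsFlat B)
    (hFA : F ⊆ A) (hFB : F ⊆ B) :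
    mob (con M F) (A \ F) (B \ F) = mob M A B := by
  by_cases hAB : A ⊆ B
  · refine mob_map M (con M F) (· \ F) A B hA hB hAB ?_ ?_ ?_
    · exact fun H h1 h2 _ => (flat_con_iff hF).2 ⟨H, h1, hFA.trans h2, rfl⟩
    · rintro K k1 k2 k3
      obtain ⟨G, g1, g2, rfl⟩ := (flat_con_iff hF).1 k1
      refine ⟨G, g1, ?_, ?_, rfl⟩
      · intro x hx
        by_cases hxF : x ∈ F
        · exact g2 hxF
        · exact (k2 ⟨hx, hxF⟩).1
      · intro x hx
        by_cases hxF : x ∈ F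
        · exact hFB hxF
        · exact (k3 ⟨hx, hxF⟩).1
    · intro H H' h1 h2 h3 h4 h5 h6
      constructor
      · exact fun h => diff_subset_diff_left h
      · intro h x hx
        by_cases hxF : x ∈ F
        · exact (hFA.trans h5) hxF
        · exact (h ⟨hx, hxF⟩).1
  · have : ¬ (A \ F ⊆ B \ F) := by
      intro h
      apply hAB
      intro x hx
      by_cases hxF : x ∈ F
      · exact hFB hxF
      · exact (h ⟨hx, hxF⟩).1
    rw [mob_not_subset hAB, mob_not_subset this]

end Mob

section Minor

open Set Finset Polynomial

variable {M : Matroid α} {F G H R A B : Set α}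

lemma sum_flats_restrict {β : Type} [AddCommMonoid β] (hG : M.IsFlat G) (g : Set α → β) :
    ∑ H ∈ flats (M ↾ G), g H = ∑ H ∈ flats M, if H ⊆ G then g H else 0 := by
  rw [sum_flats_eq_univ _ g, sum_flats_eq_univ M (fun H => if H ⊆ G then g H else 0)]
  refine Finset.sum_congr rfl fun H _ => ?_
  by_cases h1 : M.IsFlat H <;> by_cases h2 : H ⊆ G <;>
    simp [h1, h2, flat_restrict_iff hG]

lemma sum_flats_con {β : Type} [AddCommMonoid β] (hF : M.IsFlat F) (g : Set α → β) :
    ∑ K ∈ flats (con M F), g K = ∑ G ∈ flats M, if F ⊆ G then g (G \ F) else 0 := by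
  rw [← Finset.sum_filter]
  refine (Finset.sum_bij (fun G _ => G \ F) ?_ ?_ ?_ ?_).symm
  · intro G hG
    rw [Finset.mem_filter, mem_flats] at hG
    exact mem_flats.2 ((flat_con_iff hF).2 ⟨G, hG.1, hG.2, rfl⟩)
  · intro G₁ hG₁ G₂ hG₂ heq
    rw [Finset.mem_filter, mem_flats] at hG₁ hG₂
    have heq' : G₁ \ F = G₂ \ F := heq
    rw [← diff_union_of_subset hG₁.2, ← diff_union_of_subset hG₂.2, heq']
  · intro K hK
    obtain ⟨G, h1, h2, h3⟩ := (flat_con_iff hF).1 (mem_flats.1 hK)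
    exact ⟨G, Finset.mem_filter.2 ⟨mem_flats.2 h1, h2⟩, h3.symm⟩
  · exact fun G hG => rfl

/-- The minor of `M` associated to the interval `[F, G]` of flats. -/
noncomputable def minor (M : Matroid α) (F G : Set α) : Matroid α := con (M ↾ G) F

lemma con_empty (M : Matroid α) : con M ∅ = M := by
  unfold con del
  rw [diff_empty, restrict_ground_eq_self, dual_dual]

lemma minor_bot (M : Matroid α) (G : Set α) : minor M ∅ G = M ↾ G := by
  rw [minor, con_empty]

lemma minor_top (M : Matroid α) (F : Set α) : minor M F M.E = con M F := by
  rw [minor, restrict_ground_eq_self]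

lemma minor_restrict (hFH : F ⊆ H) (hHG : H ⊆ G) (hG : G ⊆ M.E) :
    (minor M F G) ↾ (H \ F) = minor M F H := by
  rw [minor, minor, con_restrict hFH (show H ⊆ (M ↾ G).E by simpa using hHG),
    restrict_restrict_eq _ hHG]

lemma minor_con (hFH : F ⊆ H) :
    con (minor M F G) (H \ F) = minor M H G := by
  rw [minor, minor, con_con, union_diff_cancel hFH]

lemma flat_restrict_of_flat (hF : M.IsFlat F) (hG : M.IsFlat G) (hFG : F ⊆ G) :
    (M ↾ G).IsFlat F := (flat_restrict_iff hG).2 ⟨hF, hFG⟩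

lemma loopless_minor (hM : Loopless M) (hF : M.IsFlat F) (hG : M.IsFlat G) (hFG : F ⊆ G) :
    Loopless (minor M F G) :=
  con_loopless (restrict_loopless hM hG.subset_ground) (flat_restrict_of_flat hF hG hFG)

lemma rk_minor (hF : M.IsFlat F) (hG : M.IsFlat G) (hFG : F ⊆ G) :
    rk (minor M F G) = rkSet M G - rkSet M F := by
  rw [minor, rk_con (show F ⊆ (M ↾ G).E by simpa using hFG), rk_restrict,
    rkSet_restrict M hFG]

lemma rkSet_minor (hF : M.IsFlat F) (hG : M.IsFlat G) (hFH : F ⊆ H) (hHG : H ⊆ G) :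
    rkSet (minor M F G) (H \ F) = rkSet M H - rkSet M F := by
  have h1 := rkSet_con (M := M ↾ G) hFH (show H ⊆ (M ↾ G).E by simpa using hHG)
  rw [rkSet_restrict M (hFH.trans hHG), rkSet_restrict M hHG] at h1
  rw [minor]
  have h2 := rkSet_mono M hFH
  omega

lemma sum_flats_minor {β : Type} [AddCommMonoid β] (hF : M.IsFlat F) (hG : M.IsFlat G)
    (hFG : F ⊆ G) (g : Set α → β) :
    ∑ K ∈ flats (minor M F G), g K
      = ∑ H ∈ flats M, if F ⊆ H ∧ H ⊆ G then g (H \ F) else 0 := by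
  rw [minor, sum_flats_con (flat_restrict_of_flat hF hG hFG) g,
    sum_flats_restrict hG _]
  refine Finset.sum_congr rfl fun H _ => ?_
  by_cases h1 : H ⊆ G <;> by_cases h2 : F ⊆ H <;> simp [h1, h2]

lemma mob_minor (hF : M.IsFlat F) (hG : M.IsFlat G) (hA : M.IsFlat A)
    (hFA : F ⊆ A) (hAG : A ⊆ G) :
    mob (minor M F G) ∅ (A \ F) = mob M F A := by
  have hFr : (M ↾ G).IsFlat F := flat_restrict_of_flat hF hG (hFA.trans hAG)
  have hAr : (M ↾ G).IsFlat A := flat_restrict_of_flat hA hG hAG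
  have h1 : mob (minor M F G) (F \ F) (A \ F) = mob (M ↾ G) F A :=
    mob_con hFr hFr hAr Subset.rfl hFA
  rw [diff_self] at h1
  rw [h1, mob_restrict hG hF hA hAG]

lemma chi_minor (hF : M.IsFlat F) (hG : M.IsFlat G) (hFG : F ⊆ G) :
    chi (minor M F G)
      = ∑ A ∈ flats M, if F ⊆ A ∧ A ⊆ G
          then Polynomial.C (mob M F A) * Polynomial.X ^ (rkSet M G - rkSet M A) else 0 := by
  rw [chi, sum_flats_minor hF hG hFG]
  refine Finset.sum_congr rfl fun A hA => ?_
  by_cases hc : F ⊆ A ∧ A ⊆ G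
  · rw [if_pos hc, if_pos hc, mob_minor hF hG (mem_flats.1 hA) hc.1 hc.2,
      rk_minor hF hG hFG, rkSet_minor hF hG hc.1 hc.2]
    have h1 := rkSet_mono M hc.1
    have h2 := rkSet_mono M hc.2
    congr 2
    omega
  · rw [if_neg hc, if_neg hc]

end Minor

section Matrices

open Set Finset Polynomial Matrix

variable (M : Matroid α)

/-- zeta-type kernel with Möbius entries reflected. -/
noncomputable def matU : Matrix {X : Set α // M.IsFlat X} {X : Set α // M.IsFlat X} (Polynomial ℤ) :=
  Matrix.of fun F A =>
    if F.1 ⊆ A.1 then C (mob M F.1 A.1) * X ^ (rkSet M A.1 - rkSet M F.1) else 0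

noncomputable def matV : Matrix {X : Set α // M.IsFlat X} {X : Set α // M.IsFlat X} (Polynomial ℤ) :=
  Matrix.of fun F A => if F.1 ⊆ A.1 then 1 else 0

noncomputable def matW : Matrix {X : Set α // M.IsFlat X} {X : Set α // M.IsFlat X} (Polynomial ℤ) :=
  Matrix.of fun F A => if F.1 ⊆ A.1 then C (mob M F.1 A.1) else 0

noncomputable def matT : Matrix {X : Set α // M.IsFlat X} {X : Set α // M.IsFlat X} (Polynomial ℤ) :=
  Matrix.of fun F A =>
    if F.1 ⊆ A.1 then (X : Polynomial ℤ) ^ (rkSet M A.1 - rkSet M F.1) else 0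

noncomputable def matCh : Matrix {X : Set α // M.IsFlat X} {X : Set α // M.IsFlat X} (Polynomial ℤ) :=
  Matrix.of fun F G => if F.1 ⊆ G.1 then chi (minor M F.1 G.1) else 0

noncomputable def matChb : Matrix {X : Set α // M.IsFlat X} {X : Set α // M.IsFlat X} (Polynomial ℤ) :=
  Matrix.of fun F G =>
    if F.1 ⊆ G.1 then (chi (minor M F.1 G.1)).reflect (rkSet M G.1 - rkSet M F.1) else 0

lemma sum_subtype_flats {β : Type} [AddCommMonoid β] (g : Set α → β) :
    ∑ H : {X : Set α // M.IsFlat X}, g H.1 = ∑ H ∈ flats M, g H :=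
  (Finset.sum_subtype _ (fun _ => mem_flats) g).symm

lemma reflect_sum {γ : Type} (N : ℕ) (s : Finset γ) (f : γ → Polynomial ℤ) :
    (∑ i ∈ s, f i).reflect N = ∑ i ∈ s, (f i).reflect N := by
  induction s using Finset.induction_on with
  | empty => simp
  | insert _ _ h ih => rw [Finset.sum_insert h, Finset.sum_insert h, Polynomial.reflect_add, ih]

lemma neg_one_pow_C (k : ℕ) : ((-1 : Polynomial ℤ)) ^ k = C ((-1 : ℤ) ^ k) := by
  simp

lemma matV_mul_matW : matV M * matW M = 1 := by
  refine Matrix.ext fun F G => ?_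
  rw [Matrix.mul_apply, Matrix.one_apply]
  have h1 : ∀ A : {X : Set α // M.IsFlat X}, matV M F A * matW M A G
      = (fun H => if F.1 ⊆ H ∧ H ⊆ G.1 then C (mob M H G.1) else 0) A.1 := by
    intro A
    simp only [matV, matW, Matrix.of_apply]
    by_cases h1 : F.1 ⊆ A.1 <;> by_cases h2 : A.1 ⊆ G.1 <;> simp [h1, h2]
  rw [Finset.sum_congr rfl fun A _ => h1 A,
    sum_subtype_flats M (fun H => if F.1 ⊆ H ∧ H ⊆ G.1 then C (mob M H G.1) else 0)]
  have h2 : ∀ H ∈ flats M, (if F.1 ⊆ H ∧ H ⊆ G.1 then C (mob M H G.1) else 0)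
      = C (if F.1 ⊆ H ∧ H ⊆ G.1 then mob M H G.1 else 0) := by
    intro H _; split_ifs <;> simp
  rw [Finset.sum_congr rfl h2, ← map_sum, sum_mob_left F.2 G.2]
  by_cases h : F = G
  · subst h; simp
  · rw [if_neg (fun hh => h (Subtype.ext hh)), if_neg h, map_zero]

lemma matU_mul_matT : matU M * matT M = 1 := by
  refine Matrix.ext fun F G => ?_
  rw [Matrix.mul_apply, Matrix.one_apply]
  have h1 : ∀ A : {X : Set α // M.IsFlat X}, matU M F A * matT M A G
      = (fun H => if F.1 ⊆ H ∧ H ⊆ G.1 then C (mob M F.1 H) else 0) A.1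
          * (X : Polynomial ℤ) ^ (rkSet M G.1 - rkSet M F.1) := by
    intro A
    simp only [matU, matT, Matrix.of_apply]
    by_cases h1 : F.1 ⊆ A.1 <;> by_cases h2 : A.1 ⊆ G.1
    · have e1 := rkSet_mono M h1
      have e2 := rkSet_mono M h2
      rw [if_pos h1, if_pos h2, if_pos ⟨h1, h2⟩, mul_assoc, ← pow_add,
        show (rkSet M A.1 - rkSet M F.1) + (rkSet M G.1 - rkSet M A.1)
          = rkSet M G.1 - rkSet M F.1 from by omega]
    · simp [h1, h2]
    · simp [h1, h2]
    · simp [h1, h2]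
  rw [Finset.sum_congr rfl fun A _ => h1 A, ← Finset.sum_mul,
    sum_subtype_flats M (fun H => if F.1 ⊆ H ∧ H ⊆ G.1 then C (mob M F.1 H) else 0)]
  have h2 : ∀ H ∈ flats M, (if F.1 ⊆ H ∧ H ⊆ G.1 then C (mob M F.1 H) else 0)
      = C (if F.1 ⊆ H ∧ H ⊆ G.1 then mob M F.1 H else 0) := by
    intro H _; split_ifs <;> simp
  rw [Finset.sum_congr rfl h2, ← map_sum, sum_mob_right F.2 G.2]
  by_cases h : F = G
  · subst h; simp
  · rw [if_neg (fun hh => h (Subtype.ext hh)), if_neg h, map_zero, zero_mul]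

lemma matCh_eq : matCh M = matW M * matT M := by
  refine Matrix.ext fun F G => ?_
  rw [Matrix.mul_apply]
  have hterm : ∀ A : {X : Set α // M.IsFlat X}, matW M F A * matT M A G
      = (fun H => if F.1 ⊆ H ∧ H ⊆ G.1
          then C (mob M F.1 H) * (X : Polynomial ℤ) ^ (rkSet M G.1 - rkSet M H) else 0) A.1 := by
    intro A
    simp only [matW, matT, Matrix.of_apply]
    by_cases h1 : F.1 ⊆ A.1 <;> by_cases h2 : A.1 ⊆ G.1 <;> simp [h1, h2]
  rw [Finset.sum_congr rfl fun A _ => hterm A,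
    sum_subtype_flats M (fun H => if F.1 ⊆ H ∧ H ⊆ G.1
      then C (mob M F.1 H) * (X : Polynomial ℤ) ^ (rkSet M G.1 - rkSet M H) else 0)]
  simp only [matCh, Matrix.of_apply]
  by_cases h : F.1 ⊆ G.1
  · rw [if_pos h, chi_minor F.2 G.2 h]
  · rw [if_neg h]
    refine (Finset.sum_eq_zero fun H _ => ?_).symm
    rw [if_neg (fun hc => h (hc.1.trans hc.2))]

lemma matChb_eq : matChb M = matU M * matV M := by
  refine Matrix.ext fun F G => ?_
  rw [Matrix.mul_apply]
  have hterm : ∀ A : {X : Set α // M.IsFlat X}, matU M F A * matV M A G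
      = (fun H => if F.1 ⊆ H ∧ H ⊆ G.1
          then C (mob M F.1 H) * (X : Polynomial ℤ) ^ (rkSet M H - rkSet M F.1) else 0) A.1 := by
    intro A
    simp only [matU, matV, Matrix.of_apply]
    by_cases h1 : F.1 ⊆ A.1 <;> by_cases h2 : A.1 ⊆ G.1 <;> simp [h1, h2]
  rw [Finset.sum_congr rfl fun A _ => hterm A,
    sum_subtype_flats M (fun H => if F.1 ⊆ H ∧ H ⊆ G.1
      then C (mob M F.1 H) * (X : Polynomial ℤ) ^ (rkSet M H - rkSet M F.1) else 0)]
  simp only [matChb, Matrix.of_apply]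
  by_cases h : F.1 ⊆ G.1
  · rw [if_pos h, chi_minor F.2 G.2 h, reflect_sum]
    refine Finset.sum_congr rfl fun H _ => ?_
    by_cases hc : F.1 ⊆ H ∧ H ⊆ G.1
    · rw [if_pos hc, if_pos hc, Polynomial.reflect_C_mul_X_pow]
      have e1 := rkSet_mono M hc.1
      have e2 := rkSet_mono M hc.2
      rw [Polynomial.revAt_le (by omega : rkSet M G.1 - rkSet M H ≤ rkSet M G.1 - rkSet M F.1)]
      congr 2
      omega
    · rw [if_neg hc, if_neg hc, Polynomial.reflect_zero]
  · rw [if_neg h]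
    refine (Finset.sum_eq_zero fun H _ => ?_).symm
    rw [if_neg (fun hc => h (hc.1.trans hc.2))]

lemma matChb_mul_matCh : matChb M * matCh M = 1 := by
  rw [matChb_eq, matCh_eq, Matrix.mul_assoc, ← Matrix.mul_assoc (matV M),
    matV_mul_matW, Matrix.one_mul, matU_mul_matT]

end Matrices

section Main

open Set Finset Polynomial Matrix

noncomputable def matP (P : Matroid α → Polynomial ℤ) (M : Matroid α) :
    Matrix {X : Set α // M.IsFlat X} {X : Set α // M.IsFlat X} (Polynomial ℤ) :=
  Matrix.of fun F G => if F.1 ⊆ G.1 then P (minor M F.1 G.1) else 0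

noncomputable def matPb (P : Matroid α → Polynomial ℤ) (M : Matroid α) :
    Matrix {X : Set α // M.IsFlat X} {X : Set α // M.IsFlat X} (Polynomial ℤ) :=
  Matrix.of fun F G => if F.1 ⊆ G.1
    then (P (minor M F.1 G.1)).reflect (rkSet M G.1 - rkSet M F.1) else 0

noncomputable def matEta (Q : Matroid α → Polynomial ℤ) (M : Matroid α) :
    Matrix {X : Set α // M.IsFlat X} {X : Set α // M.IsFlat X} (Polynomial ℤ) :=
  Matrix.of fun F G => if F.1 ⊆ G.1
    then C ((-1 : ℤ) ^ (rkSet M G.1 - rkSet M F.1)) * Q (minor M F.1 G.1) else 0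

noncomputable def matEtab (Q : Matroid α → Polynomial ℤ) (M : Matroid α) :
    Matrix {X : Set α // M.IsFlat X} {X : Set α // M.IsFlat X} (Polynomial ℤ) :=
  Matrix.of fun F G => if F.1 ⊆ G.1
    then C ((-1 : ℤ) ^ (rkSet M G.1 - rkSet M F.1))
      * (Q (minor M F.1 G.1)).reflect (rkSet M G.1 - rkSet M F.1) else 0

variable {P Q : Matroid α → Polynomial ℤ} {M : Matroid α}

lemma natDegree_P_le (hP : IsKLPolynomial P) {N : Matroid α} (hN : Loopless N) :
    2 * (P N).natDegree ≤ rk N := by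
  rcases Nat.eq_zero_or_pos (rk N) with h | h
  · rw [hP.1 N hN h, Polynomial.natDegree_one]; omega
  · exact le_of_lt (hP.2.1 N hN h)

lemma natDegree_P_lt (hP : IsKLPolynomial P) {N : Matroid α} (hN : Loopless N)
    (h : 0 < rk N) : 2 * (P N).natDegree < rk N := hP.2.1 N hN h

lemma natDegree_Q_le (hQ : IsInvKLPolynomial Q) {N : Matroid α} (hN : Loopless N) :
    2 * (Q N).natDegree ≤ rk N := by
  rcases Nat.eq_zero_or_pos (rk N) with h | h
  · rw [hQ.1 N hN h, Polynomial.natDegree_one]; omega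
  · exact le_of_lt (hQ.2.1 N hN h)

lemma natDegree_Q_lt (hQ : IsInvKLPolynomial Q) {N : Matroid α} (hN : Loopless N)
    (h : 0 < rk N) : 2 * (Q N).natDegree < rk N := hQ.2.1 N hN h

lemma matPb_eq (hP : IsKLPolynomial P) (hM : Loopless M) :
    matPb P M = matCh M * matP P M := by
  refine Matrix.ext fun F G => ?_
  rw [Matrix.mul_apply]
  have hterm : ∀ H : {X : Set α // M.IsFlat X}, matCh M F H * matP P M H G
      = (fun K => if F.1 ⊆ K ∧ K ⊆ G.1
          then chi (minor M F.1 K) * P (minor M K G.1) else 0) H.1 := by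
    intro H
    simp only [matCh, matP, Matrix.of_apply]
    by_cases h1 : F.1 ⊆ H.1 <;> by_cases h2 : H.1 ⊆ G.1 <;> simp [h1, h2]
  rw [Finset.sum_congr rfl fun H _ => hterm H,
    sum_subtype_flats M (fun K => if F.1 ⊆ K ∧ K ⊆ G.1
      then chi (minor M F.1 K) * P (minor M K G.1) else 0)]
  simp only [matPb, Matrix.of_apply]
  by_cases h : F.1 ⊆ G.1
  · rw [if_pos h]
    have hloop : Loopless (minor M F.1 G.1) := loopless_minor hM F.2 G.2 h
    have hrec := hP.2.2 (minor M F.1 G.1) hloop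
    rw [rk_minor F.2 G.2 h] at hrec
    rw [hrec, sum_flats_minor F.2 G.2 h
      (fun K => chi ((minor M F.1 G.1) ↾ K) * P (con (minor M F.1 G.1) K))]
    refine Finset.sum_congr rfl fun H _ => ?_
    by_cases hc : F.1 ⊆ H ∧ H ⊆ G.1
    · rw [if_pos hc, if_pos hc, minor_restrict hc.1 hc.2 G.2.subset_ground, minor_con hc.1]
    · rw [if_neg hc, if_neg hc]
  · rw [if_neg h]
    exact (Finset.sum_eq_zero fun H _ => (if_neg (fun hc => h (hc.1.trans hc.2)))).symm

lemma matEtab_eq (hQ : IsInvKLPolynomial Q) (hM : Loopless M) :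
    matEtab Q M = matEta Q M * matChb M := by
  refine Matrix.ext fun F G => ?_
  rw [Matrix.mul_apply]
  have hterm : ∀ H : {X : Set α // M.IsFlat X}, matEta Q M F H * matChb M H G
      = (fun K => if F.1 ⊆ K ∧ K ⊆ G.1
          then C ((-1 : ℤ) ^ (rkSet M K - rkSet M F.1)) * Q (minor M F.1 K)
            * (chi (minor M K G.1)).reflect (rkSet M G.1 - rkSet M K) else 0) H.1 := by
    intro H
    simp only [matEta, matChb, Matrix.of_apply]
    by_cases h1 : F.1 ⊆ H.1 <;> by_cases h2 : H.1 ⊆ G.1 <;> simp [h1, h2, mul_assoc]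
  rw [Finset.sum_congr rfl fun H _ => hterm H,
    sum_subtype_flats M (fun K => if F.1 ⊆ K ∧ K ⊆ G.1
      then C ((-1 : ℤ) ^ (rkSet M K - rkSet M F.1)) * Q (minor M F.1 K)
        * (chi (minor M K G.1)).reflect (rkSet M G.1 - rkSet M K) else 0)]
  simp only [matEtab, Matrix.of_apply]
  by_cases h : F.1 ⊆ G.1
  · rw [if_pos h]
    have hloop : Loopless (minor M F.1 G.1) := loopless_minor hM F.2 G.2 h
    have hrec := hQ.2.2 (minor M F.1 G.1) hloop
    rw [rk_minor F.2 G.2 h] at hrec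
    rw [neg_one_pow_C] at hrec
    rw [hrec, sum_flats_minor F.2 G.2 h
      (fun K => (-1 : Polynomial ℤ) ^ (rkSet (minor M F.1 G.1) K)
        * Q ((minor M F.1 G.1) ↾ K)
        * (chi (con (minor M F.1 G.1) K)).reflect
            (rkSet M G.1 - rkSet M F.1 - rkSet (minor M F.1 G.1) K))]
    refine Finset.sum_congr rfl fun H _ => ?_
    by_cases hc : F.1 ⊆ H ∧ H ⊆ G.1
    · rw [if_pos hc, if_pos hc, minor_restrict hc.1 hc.2 G.2.subset_ground, minor_con hc.1,
        rkSet_minor F.2 G.2 hc.1 hc.2, neg_one_pow_C]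
      have e1 := rkSet_mono M hc.1
      have e2 := rkSet_mono M hc.2
      rw [show rkSet M G.1 - rkSet M F.1 - (rkSet M H - rkSet M F.1)
        = rkSet M G.1 - rkSet M H from by omega]
    · rw [if_neg hc, if_neg hc]
  · rw [if_neg h]
    exact (Finset.sum_eq_zero fun H _ => (if_neg (fun hc => h (hc.1.trans hc.2)))).symm

lemma reflect_S (hP : IsKLPolynomial P) (hQ : IsInvKLPolynomial Q) (hM : Loopless M)
    (F G : {X : Set α // M.IsFlat X}) :
    ((matEta Q M * matP P M) F G).reflect (rkSet M G.1 - rkSet M F.1)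
      = (matEta Q M * matP P M) F G := by
  have hterm : ∀ H : {X : Set α // M.IsFlat X},
      (matEta Q M F H * matP P M H G).reflect (rkSet M G.1 - rkSet M F.1)
      = matEtab Q M F H * matPb P M H G := by
    intro H
    simp only [matEta, matP, matEtab, matPb, Matrix.of_apply]
    by_cases h1 : F.1 ⊆ H.1 <;> by_cases h2 : H.1 ⊆ G.1
    · rw [if_pos h1, if_pos h2, if_pos h1, if_pos h2]
      have e1 := rkSet_mono M h1
      have e2 := rkSet_mono M h2
      have hdq : (C ((-1 : ℤ) ^ (rkSet M H.1 - rkSet M F.1)) * Q (minor M F.1 H.1)).natDegree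
          ≤ rkSet M H.1 - rkSet M F.1 := by
        refine (natDegree_C_mul_le _ _).trans ?_
        have hb := natDegree_Q_le hQ (loopless_minor hM F.2 H.2 h1)
        rw [rk_minor F.2 H.2 h1] at hb
        omega
      have hdp : (P (minor M H.1 G.1)).natDegree ≤ rkSet M G.1 - rkSet M H.1 := by
        have hb := natDegree_P_le hP (loopless_minor hM H.2 G.2 h2)
        rw [rk_minor H.2 G.2 h2] at hb
        omega
      rw [show rkSet M G.1 - rkSet M F.1
          = (rkSet M H.1 - rkSet M F.1) + (rkSet M G.1 - rkSet M H.1) from by omega,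
        Polynomial.reflect_mul _ _ hdq hdp, Polynomial.reflect_C_mul]
    · simp [h1, h2]
    · simp [h1, h2]
    · simp [h1, h2]
  conv_lhs => rw [Matrix.mul_apply]
  rw [reflect_sum, Finset.sum_congr rfl fun H _ => hterm H]
  have hmm : ∑ H : {X : Set α // M.IsFlat X}, matEtab Q M F H * matPb P M H G
      = (matEtab Q M * matPb P M) F G := (Matrix.mul_apply).symm
  rw [hmm, matEtab_eq hQ hM, matPb_eq hP hM, Matrix.mul_assoc,
    ← Matrix.mul_assoc (matChb M), matChb_mul_matCh, Matrix.one_mul]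

lemma rkSet_lt_of_ssubset (hF : M.IsFlat F) (hG : M.IsFlat G) (hss : F ⊂ G) :
    rkSet M F < rkSet M G := by
  obtain ⟨I, hI⟩ := M.exists_isBasis F hF.subset_ground
  obtain ⟨e, heG, heF⟩ := exists_of_ssubset hss
  have heI : e ∉ I := fun h => heF (hI.subset h)
  have heE : e ∈ M.E := hG.subset_ground heG
  have hind : M.Indep (insert e I) := by
    rw [hI.indep.insert_indep_iff_of_notMem heI, hI.closure_eq_closure, hF.closure]
    exact ⟨heE, heF⟩
  have hsub : insert e I ⊆ G := insert_subset heG (hI.subset.trans hss.subset)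
  have hcard : (insert e I).ncard ≤ rkSet M G :=
    indep_ncard_le_rk (restrict_indep_iff.2 ⟨hind, hsub⟩)
  rw [Set.ncard_insert_of_notMem heI I.toFinite] at hcard
  rw [Basis.rkSet_eq hI]
  omega

lemma matEta_mul_matP (hP : IsKLPolynomial P) (hQ : IsInvKLPolynomial Q) (hM : Loopless M) :
    matEta Q M * matP P M = 1 := by
  refine Matrix.ext fun F G => ?_
  rw [Matrix.one_apply]
  by_cases hFG : F.1 ⊆ G.1
  · by_cases hEq : F = G
    · subst hEq
      rw [if_pos rfl, Matrix.mul_apply, Finset.sum_eq_single F]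
      · simp only [matEta, matP, Matrix.of_apply, if_pos (Subset.rfl : F.1 ⊆ F.1)]
        have h0 : rk (minor M F.1 F.1) = 0 := by
          rw [rk_minor F.2 F.2 Subset.rfl]; omega
        have hl : Loopless (minor M F.1 F.1) := loopless_minor hM F.2 F.2 Subset.rfl
        rw [hQ.1 _ hl h0, hP.1 _ hl h0]
        simp
      · intro H _ hne
        simp only [matEta, matP, Matrix.of_apply]
        by_cases h1 : F.1 ⊆ H.1 <;> by_cases h2 : H.1 ⊆ F.1
        · exact absurd (Subtype.ext (subset_antisymm h2 h1)) hne
        · simp [h2]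
        · simp [h1]
        · simp [h1]
      · intro h
        exact absurd (Finset.mem_univ F) h
    · rw [if_neg hEq]
      set r := rkSet M G.1 - rkSet M F.1 with hr
      have hrpos : 0 < r := by
        have := rkSet_lt_of_ssubset F.2 G.2
          (ssubset_of_subset_of_ne hFG (fun h => hEq (Subtype.ext h)))
        omega
      have hbound : ∀ H : {X : Set α // M.IsFlat X},
          (matEta Q M F H * matP P M H G).natDegree ≤ (r - 1) / 2 := by
        intro H
        by_cases h1 : F.1 ⊆ H.1
        · by_cases h2 : H.1 ⊆ G.1
          · simp only [matEta, matP, Matrix.of_apply, if_pos h1, if_pos h2]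
            have e1 := rkSet_mono M h1
            have e2 := rkSet_mono M h2
            have hdq := natDegree_Q_le hQ (loopless_minor hM F.2 H.2 h1)
            have hdq' := natDegree_Q_lt hQ (loopless_minor hM F.2 H.2 h1)
            have hdp := natDegree_P_le hP (loopless_minor hM H.2 G.2 h2)
            have hdp' := natDegree_P_lt hP (loopless_minor hM H.2 G.2 h2)
            rw [rk_minor F.2 H.2 h1] at hdq hdq'
            rw [rk_minor H.2 G.2 h2] at hdp hdp'
            refine (Polynomial.natDegree_mul_le).trans ?_
            have hq := natDegree_C_mul_le ((-1 : ℤ) ^ (rkSet M H.1 - rkSet M F.1))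
              (Q (minor M F.1 H.1))
            rcases Nat.eq_zero_or_pos (rkSet M H.1 - rkSet M F.1) with ha | ha <;>
              rcases Nat.eq_zero_or_pos (rkSet M G.1 - rkSet M H.1) with hb | hb
            · omega
            · have := hdp' hb; omega
            · have := hdq' ha; omega
            · have := hdq' ha; have := hdp' hb; omega
          · simp [matEta, matP, show ¬ H ≤ G from h2]
        · simp [matEta, matP, show ¬ F ≤ H from h1]
      have hdC : ((matEta Q M * matP P M) F G).natDegree ≤ (r - 1) / 2 := by
        rw [Matrix.mul_apply]
        exact Polynomial.natDegree_sum_le_of_forall_le _ _ fun H _ => hbound H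
      set S := (matEta Q M * matP P M) F G with hS
      have hpal : S.reflect r = S := reflect_S hP hQ hM F G
      by_contra hne0
      have hcoeff : S.coeff S.natDegree ≠ 0 := by
        rw [← Polynomial.leadingCoeff]
        exact Polynomial.leadingCoeff_ne_zero.2 hne0
      have h1 : S.coeff (r - S.natDegree) ≠ 0 := by
        have hrw : S.coeff (r - S.natDegree) = (S.reflect r).coeff (r - S.natDegree) := by
          rw [hpal]
        rw [hrw, Polynomial.coeff_reflect,
          Polynomial.revAt_le (by omega : r - S.natDegree ≤ r),
          show r - (r - S.natDegree) = S.natDegree from by omega]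
        exact hcoeff
      have h2 : r - S.natDegree ≤ S.natDegree := Polynomial.le_natDegree_of_ne_zero h1
      omega
  · have hne : F ≠ G := fun h => hFG (h ▸ Subset.rfl)
    rw [if_neg hne, Matrix.mul_apply]
    refine Finset.sum_eq_zero fun H _ => ?_
    simp only [matEta, matP, Matrix.of_apply]
    by_cases h1 : F.1 ⊆ H.1 <;> by_cases h2 : H.1 ⊆ G.1
    · exact absurd (h1.trans h2) hFG
    · simp [h2]
    · simp [h1]
    · simp [h1]

lemma flat_empty (hM : Loopless M) : M.IsFlat ∅ := by
  refine flat_iff_closure_eq.2 ⟨?_, empty_subset _⟩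
  refine subset_antisymm (fun e he => ?_) (empty_subset _)
  obtain ⟨heE, himp⟩ := (M.empty_indep.mem_closure_iff').1 he
  exact absurd (himp (by simpa using hM e heE)) (notMem_empty e)

lemma ground_nonempty (h : 0 < rk M) : M.E.Nonempty := by
  by_contra hne
  rw [Set.not_nonempty_iff_eq_empty] at hne
  have : rk M ≤ 0 := rk_le fun I hI => by
    have hIE := hI.subset_ground
    rw [hne, subset_empty_iff] at hIE
    simp [hIE]
  omega

end Main

/-- Let `M` be a loopless matroid of rank `r > 0` on a finite ground set.
Then `Σ_{F ∈ L(M)} P_{M_F}(t) · (-1)^(r - rk F) · Q_{M^F}(t) = 0` and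
`Σ_{F ∈ L(M)} P_{M^F}(t) · (-1)^(rk F) · Q_{M_F}(t) = 0`. -/
theorem convolution_P_Q_eq_zero {α : Type} [Fintype α]
    (P Q : Matroid α → Polynomial ℤ) (hP : IsKLPolynomial P) (hQ : IsInvKLPolynomial Q)
    (M : Matroid α) (hM : Loopless M) (hrk : 0 < rk M) :
    (∑ F ∈ flats M,
        P (M ↾ F) * (-1 : Polynomial ℤ) ^ (rk M - rkSet M F) * Q (con M F)) = 0 ∧
    (∑ F ∈ flats M,
        P (con M F) * (-1 : Polynomial ℤ) ^ (rkSet M F) * Q (M ↾ F)) = 0 := by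
  have h0 : M.IsFlat ∅ := flat_empty hM
  have hE : M.IsFlat M.E := M.ground_isFlat
  have hAB := matEta_mul_matP hP hQ hM
  have hBA : matP P M * matEta Q M = 1 := mul_eq_one_comm.1 hAB
  have hneq : (⟨∅, h0⟩ : {X : Set α // M.IsFlat X}) ≠ ⟨M.E, hE⟩ := by
    intro h
    obtain ⟨e, he⟩ := ground_nonempty hrk
    have hEe : M.E = (∅ : Set α) := (Subtype.mk_eq_mk.1 h).symm
    rw [hEe] at he
    exact Set.notMem_empty e he
  constructor
  · have h1 := congrArg
      (fun Mx : Matrix {X : Set α // M.IsFlat X} {X : Set α // M.IsFlat X} (Polynomial ℤ) =>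
        Mx ⟨∅, h0⟩ ⟨M.E, hE⟩) hBA
    simp only [Matrix.one_apply, if_neg hneq] at h1
    rw [Matrix.mul_apply] at h1
    calc ∑ F ∈ flats M, P (M ↾ F) * (-1 : Polynomial ℤ) ^ (rk M - rkSet M F) * Q (con M F)
        = ∑ H : {X : Set α // M.IsFlat X},
            (fun F => P (M ↾ F) * (-1 : Polynomial ℤ) ^ (rk M - rkSet M F) * Q (con M F)) H.1 :=
          (sum_subtype_flats M _).symm
      _ = ∑ H : {X : Set α // M.IsFlat X},
            matP P M ⟨∅, h0⟩ H * matEta Q M H ⟨M.E, hE⟩ := by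
          refine Finset.sum_congr rfl fun H _ => ?_
          simp only [matP, matEta, Matrix.of_apply]
          rw [if_pos (show (⟨∅, h0⟩ : {X : Set α // M.IsFlat X}).1 ⊆ H.1 from Set.empty_subset _),
            if_pos (show H.1 ⊆ (⟨M.E, hE⟩ : {X : Set α // M.IsFlat X}).1 from H.2.subset_ground)]
          rw [show minor M (⟨∅, h0⟩ : {X : Set α // M.IsFlat X}).1 H.1 = M ↾ H.1 from
              minor_bot M H.1,
            show minor M H.1 (⟨M.E, hE⟩ : {X : Set α // M.IsFlat X}).1 = con M H.1 from
              minor_top M H.1]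
          rw [show rkSet M (⟨M.E, hE⟩ : {X : Set α // M.IsFlat X}).1 = rk M from
            (rk_eq_rkSet_ground M).symm, neg_one_pow_C]
          ring
      _ = 0 := h1
  · have h2 := congrArg
      (fun Mx : Matrix {X : Set α // M.IsFlat X} {X : Set α // M.IsFlat X} (Polynomial ℤ) =>
        Mx ⟨∅, h0⟩ ⟨M.E, hE⟩) hAB
    simp only [Matrix.one_apply, if_neg hneq] at h2
    rw [Matrix.mul_apply] at h2
    calc ∑ F ∈ flats M, P (con M F) * (-1 : Polynomial ℤ) ^ (rkSet M F) * Q (M ↾ F)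
        = ∑ H : {X : Set α // M.IsFlat X},
            (fun F => P (con M F) * (-1 : Polynomial ℤ) ^ (rkSet M F) * Q (M ↾ F)) H.1 :=
          (sum_subtype_flats M _).symm
      _ = ∑ H : {X : Set α // M.IsFlat X},
            matEta Q M ⟨∅, h0⟩ H * matP P M H ⟨M.E, hE⟩ := by
          refine Finset.sum_congr rfl fun H _ => ?_
          simp only [matP, matEta, Matrix.of_apply]
          rw [if_pos (show (⟨∅, h0⟩ : {X : Set α // M.IsFlat X}).1 ⊆ H.1 from Set.empty_subset _),
            if_pos (show H.1 ⊆ (⟨M.E, hE⟩ : {X : Set α // M.IsFlat X}).1 from H.2.subset_ground)]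
          rw [show minor M (⟨∅, h0⟩ : {X : Set α // M.IsFlat X}).1 H.1 = M ↾ H.1 from
              minor_bot M H.1,
            show minor M H.1 (⟨M.E, hE⟩ : {X : Set α // M.IsFlat X}).1 = con M H.1 from
              minor_top M H.1]
          rw [show rkSet M (⟨∅, h0⟩ : {X : Set α // M.IsFlat X}).1 = 0 from rkSet_empty M,
            Nat.sub_zero, neg_one_pow_C]
          ring
      _ = 0 := h2

end KL
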